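/- arXiv:2211.01410 — 10 statements merged into one kernel-verified Lean document; each statement's English description precedes it below -/
import Mathlib

section
/- Every positive integer n can be written in exactly one way as n = ∑_{i∈S} T(i) where S is a Tribonacci representation set; that is, for every positive integer n there exists a unique finite set S of natural numbers, all elements at least 3 and containing no three consecutive integers, with n = ∑_{i∈S} T(i). -/
/-- The Tribonacci sequence: T(0)=0, T(1)=0, T(2)=1,
    T(n+3) = T(n+2) + T(n+1) + T(n). -/
def trib : ℕ → ℕ
  | 0 => 0
  | 1 => 0
  | 2 => 1
  | n + 3 => trib (n + 2) + trib (n + 1) + trib n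

/-- A Tribonacci representation set: a finite set of naturals, all at least 3,
    containing no three consecutive integers. -/
def IsTribRep (S : Finset ℕ) : Prop :=
  (∀ i ∈ S, 3 ≤ i) ∧ ∀ i : ℕ, ¬(i ∈ S ∧ i + 1 ∈ S ∧ i + 2 ∈ S)

/-!
Since a representation set never contains all three of `k`, `k + 1`, `k + 2`, the recurrence
`T(k+3) = T(k+2) + T(k+1) + T(k)` shows by induction that a representation set with all
elements below `k` sums to less than `T(k)`. Hence the largest element of a representation
of `n` is the unique `a` with `T(a) ≤ n < T(a+1)`; removing it gives uniqueness by induction.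
Conversely the greedy choice of the largest terms shows that every `n < T(k)` is represented
by a set with elements below `k`.
-/

open Finset

theorem trib_add_three (n : ℕ) : trib (n + 3) = trib (n + 2) + trib (n + 1) + trib n := rfl

theorem trib_monotoneOn : MonotoneOn trib {n | 2 ≤ n} :=
  monotoneOn_nat_Ici_of_le_succ fun n hn => by
    obtain ⟨m, rfl⟩ := Nat.exists_eq_add_of_le' hn
    rw [trib_add_three]
    omega

theorem trib_pos_iff {n : ℕ} : 0 < trib n ↔ 2 ≤ n := by
  refine ⟨fun h => ?_, fun hn => ?_⟩
  · rcases n with _ | _ | n <;> simp_all [trib]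
  · exact lt_of_lt_of_le (by decide) (trib_monotoneOn (le_refl 2) hn hn)

theorem lt_trib_add_three (n : ℕ) : n < trib (n + 3) := by
  induction n with
  | zero => decide
  | succ n ih =>
    have h := trib_pos_iff.2 (show 2 ≤ n + 2 by omega)
    show n + 1 < trib (n + 3) + trib (n + 2) + trib (n + 1)
    omega

theorem eq_of_mem_Ico_trib {a b n : ℕ} (ha : 2 ≤ a) (hb : 2 ≤ b)
    (hna : n ∈ Ico (trib a) (trib (a + 1))) (hnb : n ∈ Ico (trib b) (trib (b + 1))) :
    a = b := by
  rw [mem_Ico] at hna hnb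
  by_contra hne
  rcases Nat.lt_or_gt_of_ne hne with hab | hab
  · have := trib_monotoneOn (show 2 ≤ a + 1 by omega) hb hab
    omega
  · have := trib_monotoneOn (show 2 ≤ b + 1 by omega) ha hab
    omega

theorem forall_mem_erase_lt {S : Finset ℕ} {k : ℕ} (hlt : ∀ i ∈ S, i < k + 1) :
    ∀ i ∈ S.erase k, i < k := fun i hi =>
  lt_of_le_of_ne (Nat.le_of_lt_succ (hlt i (mem_of_mem_erase hi))) (ne_of_mem_erase hi)

theorem forall_lt_of_notMem {S : Finset ℕ} {k : ℕ} (hlt : ∀ i ∈ S, i < k + 1)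
    (hk : k ∉ S) : ∀ i ∈ S, i < k :=
  erase_eq_of_notMem hk ▸ forall_mem_erase_lt hlt

theorem isTribRep_empty : IsTribRep ∅ := ⟨by simp, by simp⟩

namespace IsTribRep

variable {S T : Finset ℕ}

theorem mono (hT : IsTribRep T) (hST : S ⊆ T) : IsTribRep S :=
  ⟨fun i hi => hT.1 i (hST hi), fun i h => hT.2 i ⟨hST h.1, hST h.2.1, hST h.2.2⟩⟩

theorem insert {j : ℕ} (hS : IsTribRep S) (hj : 3 ≤ j) (hlt : ∀ i ∈ S, i < j)
    (hgap : ¬(j - 2 ∈ S ∧ j - 1 ∈ S)) : IsTribRep (insert j S) := by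
  refine ⟨fun i hi => ?_, fun i ⟨h0, h1, h2⟩ => ?_⟩
  · rcases mem_insert.1 hi with rfl | hi
    exacts [hj, hS.1 i hi]
  have hle : ∀ x ∈ Insert.insert j S, x ≤ j :=
    (forall_mem_insert _ _ _).2 ⟨le_rfl, fun x hx => (hlt x hx).le⟩
  have hi0 : i ∈ S := (mem_insert.1 h0).resolve_left (by have := hle _ h2; omega)
  have hi1 : i + 1 ∈ S := (mem_insert.1 h1).resolve_left (by have := hle _ h2; omega)
  rcases mem_insert.1 h2 with rfl | hi2
  · exact hgap ⟨by simpa using hi0, by simpa using hi1⟩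
  · exact hS.2 i ⟨hi0, hi1, hi2⟩

theorem sum_eq_zero_iff (hS : IsTribRep S) : ∑ i ∈ S, trib i = 0 ↔ S = ∅ := by
  refine Finset.sum_eq_zero_iff.trans ⟨fun h => eq_empty_of_forall_notMem fun i hi => ?_, ?_⟩
  · exact (trib_pos_iff.2 (by have := hS.1 i hi; omega)).ne' (h i hi)
  · rintro rfl
    simp

theorem sum_lt_trib {k : ℕ} (hS : IsTribRep S) (hk : 2 ≤ k) (hlt : ∀ i ∈ S, i < k) :
    ∑ i ∈ S, trib i < trib k := by
  induction k using Nat.strong_induction_on generalizing S with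
  | _ k ih =>
  obtain rfl | ⟨k, rfl⟩ : k = 2 ∨ ∃ m, k = m + 3 := by
    rcases Nat.exists_eq_add_of_le' hk with ⟨m, rfl⟩
    rcases m with _ | m
    exacts [.inl rfl, .inr ⟨m, rfl⟩]
  · obtain rfl : S = ∅ :=
      eq_empty_of_forall_notMem fun i hi => by have := hS.1 i hi; have := hlt i hi; omega
    decide
  rw [trib_add_three]
  by_cases h2 : k + 2 ∈ S
  swap
  · have := ih (k + 2) (by omega) hS (by omega) (forall_lt_of_notMem hlt h2)
    omega
  rw [← add_sum_erase _ _ h2]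
  have hS₂ := hS.mono (erase_subset (k + 2) S)
  have hlt₂ := forall_mem_erase_lt hlt
  by_cases h1 : k + 1 ∈ S
  · have h1' : k + 1 ∈ S.erase (k + 2) := mem_erase.2 ⟨by omega, h1⟩
    have h0 : k ∉ (S.erase (k + 2)).erase (k + 1) := fun h0 =>
      hS.2 k ⟨mem_of_mem_erase (mem_of_mem_erase h0), h1, h2⟩
    rw [← add_sum_erase _ _ h1']
    have := ih k (by omega) (hS₂.mono (erase_subset _ _)) (by have := hS.1 _ h1; omega)
      (forall_lt_of_notMem (forall_mem_erase_lt hlt₂) h0)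
    omega
  · have := ih (k + 1) (by omega) hS₂ (by have := hS.1 _ h2; omega)
      (forall_lt_of_notMem hlt₂ fun h => h1 (mem_of_mem_erase h))
    omega

theorem sum_mem_Ico_max' (hS : IsTribRep S) (hne : S.Nonempty) :
    ∑ i ∈ S, trib i ∈ Ico (trib (S.max' hne)) (trib (S.max' hne + 1)) :=
  mem_Ico.2 ⟨single_le_sum (fun _ _ => Nat.zero_le _) (S.max'_mem hne),
    hS.sum_lt_trib (by have := hS.1 _ (S.max'_mem hne); omega)
      fun i hi => Nat.lt_succ_of_le (S.le_max' i hi)⟩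

theorem eq_of_sum_eq (hS : IsTribRep S) (hT : IsTribRep T)
    (h : ∑ i ∈ S, trib i = ∑ i ∈ T, trib i) : S = T := by
  induction S using Finset.strongInduction generalizing T with
  | H S ih =>
  obtain rfl | hSne := S.eq_empty_or_nonempty
  · exact (hT.sum_eq_zero_iff.1 (by simpa using h.symm)).symm
  have hTne : T.Nonempty := nonempty_iff_ne_empty.2 fun hT0 =>
    hSne.ne_empty (hS.sum_eq_zero_iff.1 (by simp [h, hT0]))
  have hmax : S.max' hSne = T.max' hTne :=
    eq_of_mem_Ico_trib (by have := hS.1 _ (S.max'_mem hSne); omega)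
      (by have := hT.1 _ (T.max'_mem hTne); omega)
      (hS.sum_mem_Ico_max' hSne) (h ▸ hT.sum_mem_Ico_max' hTne)
  have haS := S.max'_mem hSne
  have haT : S.max' hSne ∈ T := hmax ▸ T.max'_mem hTne
  rw [← add_sum_erase _ _ haS, ← add_sum_erase _ _ haT] at h
  rw [← insert_erase haS, ← insert_erase haT, ih _ (erase_ssubset haS)
    (hS.mono (erase_subset _ _)) (hT.mono (erase_subset (S.max' hSne) _)) (by omega)]

end IsTribRep

theorem exists_isTribRep_sum_eq {k n : ℕ} (hn : n < trib k) :
    ∃ S, IsTribRep S ∧ (∀ i ∈ S, i < k) ∧ ∑ i ∈ S, trib i = n := by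
  induction k using Nat.strong_induction_on generalizing n with
  | _ k ih =>
  obtain hk | ⟨k, rfl⟩ : k ≤ 2 ∨ ∃ m, k = m + 3 := by
    rcases Nat.lt_or_ge k 3 with hk | hk
    exacts [.inl (by omega), .inr (Nat.exists_eq_add_of_le' hk)]
  · have : trib k ≤ 1 := by interval_cases k <;> decide
    exact ⟨∅, isTribRep_empty, by simp, by simp; omega⟩
  rw [trib_add_three] at hn
  by_cases h2 : n < trib (k + 2)
  · obtain ⟨S, hS, hlt, rfl⟩ := ih (k + 2) (by omega) h2
    exact ⟨S, hS, fun i hi => (hlt i hi).trans (by omega), rfl⟩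
  by_cases h1 : n - trib (k + 2) < trib (k + 1)
  · have hk := trib_pos_iff.1 (show 0 < trib (k + 1) by omega)
    obtain ⟨S, hS, hlt, hsum⟩ := ih (k + 1) (by omega) h1
    refine ⟨insert (k + 2) S, hS.insert (by omega) (fun i hi => (hlt i hi).trans (by omega))
      fun h => by have := hlt _ h.2; omega,
      (forall_mem_insert _ _ _).2 ⟨by omega, fun i hi => (hlt i hi).trans (by omega)⟩, ?_⟩
    rw [sum_insert fun h => by have := hlt _ h; omega]
    omega
  have hk := trib_pos_iff.1 (show 0 < trib k by omega)
  obtain ⟨S, hS, hlt, hsum⟩ :=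
    ih k (by omega) (show n - trib (k + 2) - trib (k + 1) < trib k by omega)
  have hlt₁ : ∀ i ∈ insert (k + 1) S, i < k + 2 :=
    (forall_mem_insert _ _ _).2 ⟨by omega, fun i hi => (hlt i hi).trans (by omega)⟩
  have hS₁ := hS.insert (show 3 ≤ k + 1 by omega) (fun i hi => (hlt i hi).trans (by omega))
    fun h => by have := hlt _ h.2; omega
  have hS₂ := hS₁.insert (show 3 ≤ k + 2 by omega) hlt₁ fun h => by
    rcases mem_insert.1 h.1 with h0 | h0
    · omega
    · have := hlt _ h0; omega
  refine ⟨_, hS₂,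
    (forall_mem_insert _ _ _).2 ⟨by omega, fun i hi => (hlt₁ i hi).trans (by omega)⟩, ?_⟩
  rw [sum_insert fun h => by have := hlt₁ _ h; omega,
    sum_insert fun h => by have := hlt _ h; omega]
  omega

theorem trib_rep_exists_unique_general (n : ℕ) :
    ∃! S : Finset ℕ, IsTribRep S ∧ n = ∑ i ∈ S, trib i := by
  obtain ⟨S, hS, -, hsum⟩ := exists_isTribRep_sum_eq (lt_trib_add_three n)
  exact ⟨S, ⟨hS, hsum.symm⟩, fun T ⟨hT, hTsum⟩ =>
    hT.eq_of_sum_eq hS (hTsum.symm.trans hsum.symm)⟩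

/-- Every positive integer has a unique Tribonacci representation. -/
theorem trib_rep_exists_unique (n : ℕ) (hn : 0 < n) :
    ∃! S : Finset ℕ, IsTribRep S ∧ n = ∑ i ∈ S, trib i :=
  trib_rep_exists_unique_general n
end

section
/- For every positive integer n, α·n − 0.85 < out(n) < α·n + 0.85, where out(n) is the Tribonacci successor of n. -/
/-!
Writing `e n = tribErr α n = T(n+1) - α T(n)`, we have `out(n) - α n = ∑_{i ∈ S} e i`.
The sequence `e` satisfies the Tribonacci recurrence, but it has no component along `αⁿ`, so it
is governed by the two complex conjugate roots of `x³ - x² - x - 1`, of modulus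
`α^(-1/2) < 3/4`. Concretely, a positive definite quadratic form in `(e (n+1), e n)` is divided
by `α` at each step, which gives `|e n| ≤ 2 (3/4)ⁿ`. Hence indices `≥ 32` contribute less than
`0.001`, while the finitely many remaining `e i` are evaluated numerically: their positive parts
sum to less than `0.8482` and their negative parts to less than `0.59`.
-/

open Finset

theorem sum_le_sum_posPart_of_subset {ι M : Type*} [AddCommGroup M] [Lattice M]
    [IsOrderedAddMonoid M] {s t : Finset ι} (hst : s ⊆ t) {f g : ι → M}
    (hfg : ∀ i ∈ s, f i ≤ g i) : ∑ i ∈ s, f i ≤ ∑ i ∈ t, (g i)⁺ :=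
  calc ∑ i ∈ s, f i ≤ ∑ i ∈ s, (g i)⁺ := sum_le_sum fun i hi => (hfg i hi).trans (le_posPart _)
    _ ≤ ∑ i ∈ t, (g i)⁺ := sum_le_sum_of_subset_of_nonneg hst fun _ _ _ => posPart_nonneg _

theorem sum_pow_le_of_forall_le {r : ℝ} (hr₀ : 0 ≤ r) (hr₁ : r < 1) {s : Finset ℕ} {N : ℕ}
    (hs : ∀ i ∈ s, N ≤ i) : ∑ i ∈ s, r ^ i ≤ r ^ N / (1 - r) := by
  have hsub : s ⊆ Ico N (s.sup id + 1) := fun i hi =>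
    mem_Ico.2 ⟨hs i hi, Nat.lt_succ_of_le (le_sup (f := id) hi)⟩
  calc ∑ i ∈ s, r ^ i ≤ ∑ i ∈ Ico N (s.sup id + 1), r ^ i :=
        sum_le_sum_of_subset_of_nonneg hsub fun i _ _ => pow_nonneg hr₀ i
    _ ≤ r ^ N / (1 - r) := geom_sum_Ico_le_of_lt_one hr₀ hr₁

theorem tribonacci_root_bounds {α : ℝ} (hα : α ^ 3 = α ^ 2 + α + 1) :
    1.8392867552141 < α ∧ α < 1.8392867552142 := by
  constructor
  · by_contra! h
    nlinarith [mul_nonneg (sub_nonneg.2 h) (sq_nonneg (α + 0.42))]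
  · by_contra! h
    nlinarith [mul_nonneg (sub_nonneg.2 h) (sq_nonneg (α + 0.42))]

noncomputable def tribErr (α : ℝ) (n : ℕ) : ℝ := trib (n + 1) - α * trib n

theorem tribErr_zero (α : ℝ) : tribErr α 0 = 0 := by simp [tribErr, trib]

theorem tribErr_one (α : ℝ) : tribErr α 1 = 1 := by simp [tribErr, trib]

/-- The recurrence of `(x - β)(x - γ) = x² + (α - 1) x + α⁻¹`, where `β, γ` are the other two
roots of `x³ - x² - x - 1`. -/
theorem tribErr_add_two {α : ℝ} (hα : α ^ 3 = α ^ 2 + α + 1) (n : ℕ) :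
    α * tribErr α (n + 2) = α * (1 - α) * tribErr α (n + 1) - tribErr α n := by
  have h₁ : (trib (n + 3) : ℝ) = trib (n + 2) + trib (n + 1) + trib n := by
    exact_mod_cast rfl
  simp only [tribErr, h₁]
  linear_combination (-(trib (n + 1) : ℝ)) * hα

/-- This is `α (x - β y)(x - γ y) = α |x - β y|²` at `x = e (n+1)`, `y = e n`. A step of the
recurrence multiplies `x - β y` by `γ`, so the form gets divided by `|γ|² = α⁻¹`. -/
noncomputable def tribErrForm (α : ℝ) (n : ℕ) : ℝ :=
  α * tribErr α (n + 1) ^ 2 + α * (α - 1) * tribErr α (n + 1) * tribErr α n + tribErr α n ^ 2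

theorem mul_tribErrForm_succ {α : ℝ} (hα : α ^ 3 = α ^ 2 + α + 1) (n : ℕ) :
    α * tribErrForm α (n + 1) = tribErrForm α n := by
  simp only [tribErrForm]
  linear_combination (α * tribErr α (n + 2) - tribErr α n) * tribErr_add_two hα n

theorem pow_mul_tribErrForm {α : ℝ} (hα : α ^ 3 = α ^ 2 + α + 1) (n : ℕ) :
    α ^ n * tribErrForm α n = α := by
  induction n with
  | zero => simp [tribErrForm, tribErr_zero, tribErr_one]
  | succ k ih =>
    calc α ^ (k + 1) * tribErrForm α (k + 1) = α ^ k * (α * tribErrForm α (k + 1)) := by ring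
      _ = α := by rw [mul_tribErrForm_succ hα, ih]

theorem sq_tribErr_succ_le_tribErrForm {α : ℝ} (hα : α ^ 3 = α ^ 2 + α + 1) (h₁ : 1 < α)
    (h₃ : α ≤ 3) (n : ℕ) : tribErr α (n + 1) ^ 2 ≤ tribErrForm α n := by
  set x := tribErr α (n + 1)
  set y := tribErr α n
  -- `α²(α - 1) = α + 1` turns the discriminant condition into `α ≤ 3`
  have key : tribErrForm α n - x ^ 2 =
      (y + α * (α - 1) / 2 * x) ^ 2 + (α - 1) * (3 - α) / 4 * x ^ 2 := by
    simp only [tribErrForm]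
    linear_combination (-(α - 1) / 4 * x ^ 2) * hα
  have hcoef : 0 ≤ (α - 1) * (3 - α) / 4 := by nlinarith
  rw [← sub_nonneg, key]
  positivity

theorem abs_tribErr_le {α : ℝ} (hα : α ^ 3 = α ^ 2 + α + 1) (n : ℕ) :
    |tribErr α n| ≤ 2 * (3 / 4) ^ n := by
  obtain ⟨hlo, hhi⟩ := tribonacci_root_bounds hα
  cases n with
  | zero => simp [tribErr_zero]
  | succ k =>
    have hbound : (16 / 9 : ℝ) ^ k * (2 * (3 / 4) ^ (k + 1)) ^ 2 = 9 / 4 := by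
      have h₁ : (16 / 9 : ℝ) ^ k * ((3 / 4) ^ k) ^ 2 = 1 := by
        rw [← pow_mul, mul_comm k 2, pow_mul, ← mul_pow]; norm_num
      linear_combination (9 / 4 : ℝ) * h₁
    have hsq : (16 / 9 : ℝ) ^ k * tribErr α (k + 1) ^ 2 ≤
        (16 / 9 : ℝ) ^ k * (2 * (3 / 4) ^ (k + 1)) ^ 2 :=
      calc (16 / 9 : ℝ) ^ k * tribErr α (k + 1) ^ 2 ≤ α ^ k * tribErr α (k + 1) ^ 2 := by
            gcongr; linarith
        _ ≤ α ^ k * tribErrForm α k := by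
            gcongr; exact sq_tribErr_succ_le_tribErrForm hα (by linarith) (by linarith) k
        _ = α := pow_mul_tribErrForm hα k
        _ ≤ 9 / 4 := by linarith
        _ = _ := hbound.symm
    exact abs_le_of_sq_le_sq (le_of_mul_le_mul_left hsq (by positivity)) (by positivity)

theorem abs_sum_tribErr_le_of_forall_le {α : ℝ} (hα : α ^ 3 = α ^ 2 + α + 1) {s : Finset ℕ}
    {N : ℕ} (hs : ∀ i ∈ s, N ≤ i) : |∑ i ∈ s, tribErr α i| ≤ 8 * (3 / 4) ^ N :=
  calc |∑ i ∈ s, tribErr α i| ≤ ∑ i ∈ s, 2 * (3 / 4 : ℝ) ^ i :=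
        (abs_sum_le_sum_abs _ _).trans (sum_le_sum fun i _ => abs_tribErr_le hα i)
    _ = 2 * ∑ i ∈ s, (3 / 4 : ℝ) ^ i := (mul_sum _ _ _).symm
    _ ≤ 2 * ((3 / 4) ^ N / (1 - 3 / 4)) := by
        gcongr; exact sum_pow_le_of_forall_le (by norm_num) (by norm_num) hs
    _ = 8 * (3 / 4) ^ N := by ring

theorem sum_posPart_trib_sub_le :
    ∑ i ∈ Ico 3 32, ((trib (i + 1) : ℝ) - 1.8392867552141 * trib i)⁺ ≤ 0.8482 := by
  simp only [sum_Ico_eq_sum_range, sum_range_succ, sum_range_zero]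
  norm_num [trib, posPart]

theorem sum_posPart_sub_trib_le :
    ∑ i ∈ Ico 3 32, (1.8392867552142 * trib i - (trib (i + 1) : ℝ))⁺ ≤ 0.59 := by
  simp only [sum_Ico_eq_sum_range, sum_range_succ, sum_range_zero]
  norm_num [trib, posPart]

theorem abs_sum_tribErr_lt {α : ℝ} (hα : α ^ 3 = α ^ 2 + α + 1) {S : Finset ℕ}
    (hS : ∀ i ∈ S, 3 ≤ i) : |∑ i ∈ S, tribErr α i| < 0.85 := by
  obtain ⟨hlo, hhi⟩ := tribonacci_root_bounds hα
  rw [← sum_filter_add_sum_filter_not S (· < 32)]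
  have hhead : S.filter (· < 32) ⊆ Ico 3 32 := fun i hi => by
    rw [mem_filter] at hi; exact mem_Ico.2 ⟨hS i hi.1, hi.2⟩
  have hupper : ∑ i ∈ S.filter (· < 32), tribErr α i ≤ 0.8482 :=
    (sum_le_sum_posPart_of_subset hhead fun i _ => by
      simp only [tribErr]; gcongr).trans sum_posPart_trib_sub_le
  have hlower : ∑ i ∈ S.filter (· < 32), -tribErr α i ≤ 0.59 :=
    (sum_le_sum_posPart_of_subset hhead fun i _ => by
      simp only [tribErr, neg_sub]; gcongr).trans sum_posPart_sub_trib_le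
  have htail := abs_sum_tribErr_le_of_forall_le hα (s := S.filter (¬ · < 32)) (N := 32)
    fun i hi => not_lt.1 (mem_filter.1 hi).2
  rw [sum_neg_distrib] at hlower
  rw [abs_le] at htail
  rw [abs_lt]
  constructor <;> linarith [htail.1, htail.2]

theorem trib_successor_bounds_general (α : ℝ) (hα : α ^ 3 = α ^ 2 + α + 1)
    (n : ℕ) (S : Finset ℕ) (hS : IsTribRep S)
    (hsum : n = ∑ i ∈ S, trib i) :
    α * n - 0.85 < (↑(∑ i ∈ S, trib (i + 1)) : ℝ) ∧
      (↑(∑ i ∈ S, trib (i + 1)) : ℝ) < α * n + 0.85 := by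
  have hout : (↑(∑ i ∈ S, trib (i + 1)) : ℝ) = α * n + ∑ i ∈ S, tribErr α i := by
    simp only [hsum, tribErr, Nat.cast_sum, mul_sum, ← sum_add_distrib, add_sub_cancel]
  rw [hout]
  have h := abs_lt.1 (abs_sum_tribErr_lt hα hS.1)
  constructor <;> linarith [h.1, h.2]

/-- For every positive integer `n`, `α·n − 0.85 < out(n) < α·n + 0.85`,
    where `out(n)` is the Tribonacci successor of `n`. -/
theorem trib_successor_bounds (α : ℝ) (hα : α ^ 3 = α ^ 2 + α + 1)
    (n : ℕ) (hn : 0 < n) (S : Finset ℕ) (hS : IsTribRep S)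
    (hsum : n = ∑ i ∈ S, trib i) :
    α * n - 0.85 < (↑(∑ i ∈ S, trib (i + 1)) : ℝ) ∧
      (↑(∑ i ∈ S, trib (i + 1)) : ℝ) < α * n + 0.85 :=
  trib_successor_bounds_general α hα n S hS hsum
end

section
/- There is no natural number n such that T(n+1) − α·T(n), T(n+2) − α·T(n+1), and T(n+3) − α·T(n+2) are all positive, and there is no natural number n such that all three of these quantities are negative. -/
/-- `T(n+1) − α·T(n)` cannot have the same sign for three consecutive values of `n`. -/
theorem trib_no_three_consecutive_same_sign (α : ℝ) (hα : α ^ 3 = α ^ 2 + α + 1) :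
    (¬∃ n : ℕ, 0 < (trib (n + 1) : ℝ) - α * trib n ∧
        0 < (trib (n + 2) : ℝ) - α * trib (n + 1) ∧
        0 < (trib (n + 3) : ℝ) - α * trib (n + 2)) ∧
    (¬∃ n : ℕ, (trib (n + 1) : ℝ) - α * trib n < 0 ∧
        (trib (n + 2) : ℝ) - α * trib (n + 1) < 0 ∧
        (trib (n + 3) : ℝ) - α * trib (n + 2) < 0) := by
  have hα1 : 1 < α := by nlinarith [sq_nonneg α, sq_nonneg (α + 1), sq_nonneg (α - 1)]
  have hc2 : 0 < α ^ 2 - α := by nlinarith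
  have hc3 : 0 < α := by linarith
  constructor <;> rintro ⟨n, h1, h2, h3⟩ <;>
  · have hrec : (trib (n + 3) : ℝ) = trib (n + 2) + trib (n + 1) + trib n := by
      push_cast [show trib (n + 3) = trib (n + 2) + trib (n + 1) + trib n from rfl]; ring
    have key : ((trib (n + 1) : ℝ) - α * trib n)
        + (α ^ 2 - α) * ((trib (n + 2) : ℝ) - α * trib (n + 1))
        + α * ((trib (n + 3) : ℝ) - α * trib (n + 2)) = 0 := by
      rw [hrec]; linear_combination -(trib (n + 1) : ℝ) * hα
    nlinarith [key, hc2, hc3, h1, h2, h3]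
end

section
/- There is no infinite chain of difference-inverses among extraTribs: there is no function F : ℕ → (ℕ → ℤ) such that for every k, the sequence F_k satisfies the Tribonacci rule, F_k is eventually positive (there exists N with F_k(n) > 0 for all n ≥ N), and F_{k+1}(n+1) − F_{k+1}(n) = F_k(n) for all n. -/
/-!
Writing `S` for the shift, the Tribonacci rule for `g = F (k+1)` turns `S g - g = F k` into
`2 g = (S² - 1) F k`. Iterating three times, `8 F (k+3) = (S² - 1)³ F k`, and modulo
`S³ - S² - S - 1` the polynomial `(S² - 1)³` reduces to `4 S²`, so `2 F (k+3) n = F k (n+2)`.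
Hence every term of every `F k` from index `2` on is twice a term of the chain, and running the
recurrence backwards the same holds at indices `0` and `1`. By induction every term is divisible
by every power of `2`, so the chain is identically zero, contradicting eventual positivity.
-/

section Tribonacci

variable {R : Type*} [CommRing R]

def IsTribonacci (f : ℕ → R) : Prop :=
  ∀ n, f (n + 3) = f (n + 2) + f (n + 1) + f n

def IsDiffInverse (g f : ℕ → R) : Prop :=
  ∀ n, g (n + 1) - g n = f n

theorem IsTribonacci.two_mul_eq_sub {f g : ℕ → R} (hg : IsTribonacci g) (hgf : IsDiffInverse g f)
    (n : ℕ) : 2 * g n = f (n + 2) - f n := by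
  linear_combination -hg n + hgf (n + 2) - hgf n

theorem IsTribonacci.dvd_of_forall_dvd_add_two {f : ℕ → R} (hf : IsTribonacci f) {d : R}
    (hd : ∀ n, d ∣ f (n + 2)) : ∀ n, d ∣ f n := by
  have h1 : d ∣ f 1 := by
    have : f 1 = f 4 - f 3 - f 2 := by linear_combination (norm := ring_nf) -hf 1
    rw [this]
    exact ((hd 2).sub (hd 1)).sub (hd 0)
  have h0 : d ∣ f 0 := by
    have : f 0 = f 3 - f 2 - f 1 := by linear_combination (norm := ring_nf) -hf 0
    rw [this]
    exact ((hd 1).sub (hd 0)).sub h1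
  rintro (_ | _ | n)
  exacts [h0, h1, hd n]

end Tribonacci

section Chain

variable {R : Type*} [CommRing R] {F : ℕ → ℕ → R}
  (hF : ∀ k, IsTribonacci (F k) ∧ IsDiffInverse (F (k + 1)) (F k))
include hF

theorem two_mul_chain_add_three [NoZeroDivisors R] [CharZero R] (k n : ℕ) :
    2 * F (k + 3) n = F k (n + 2) := by
  have e (j m : ℕ) : 2 * F (j + 1) m = F j (m + 2) - F j m :=
    (hF (j + 1)).1.two_mul_eq_sub (hF j).2 m
  have t := (hF k).1
  refine mul_left_cancel₀ (by norm_num : (4 : R) ≠ 0) ?_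
  -- `(S² - 1)³ - 4 S² = (S³ - S² - S - 1) (S³ + S² - S + 1)`
  linear_combination (norm := ring_nf) 4 * e (k + 2) n + 2 * e (k + 1) (n + 2) - 2 * e (k + 1) n
    + e k (n + 4) - 2 * e k (n + 2) + e k n + t (n + 3) + t (n + 2) - t (n + 1) + t n

theorem two_pow_dvd_chain [NoZeroDivisors R] [CharZero R] (j : ℕ) :
    ∀ k n, (2 : R) ^ j ∣ F k n := by
  induction j with
  | zero => simp
  | succ j ih =>
    intro k
    refine (hF k).1.dvd_of_forall_dvd_add_two fun n => ?_
    rw [← two_mul_chain_add_three hF, pow_succ']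
    exact mul_dvd_mul_left 2 (ih (k + 3) n)

end Chain

/-- There is no infinite chain of difference-inverses among extraTribs: no
    `F : ℕ → (ℕ → ℤ)` such that every `F k` satisfies the Tribonacci rule, is
    eventually positive, and `F (k+1)` has difference sequence `F k`. -/
theorem no_infinite_inverse_chain :
    ¬∃ F : ℕ → ℕ → ℤ,
      ∀ k : ℕ,
        (∀ n : ℕ, F k (n + 3) = F k (n + 2) + F k (n + 1) + F k n) ∧
        (∃ N : ℕ, ∀ n ≥ N, 0 < F k n) ∧
        (∀ n : ℕ, F (k + 1) (n + 1) - F (k + 1) n = F k n) := by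
  rintro ⟨F, hF⟩
  obtain ⟨N, hN⟩ := (hF 0).2.1
  have hne : F 0 N ≠ 0 := (hN N le_rfl).ne'
  obtain ⟨j, hj⟩ := (Int.finiteMultiplicity_iff (a := 2)).mpr ⟨by decide, hne⟩
  exact hj (two_pow_dvd_chain (fun k => ⟨(hF k).1, (hF k).2.2⟩) (j + 1) 0 N)
end

section
/- Let S : ℤ → ℤ satisfy S(n) = S(n−1) + S(n−2) + S(n−3) for all n ∈ ℤ, and suppose S is eventually positive (there exists N such that S(n) > 0 for all n ≥ N). Then: (a) there exists k with S(k) < 0; (b) there is no n with S(n), S(n+1), S(n+2) all negative; (c) if S(k) < 0, then there is no n ≤ k with S(n), S(n+1), S(n+2) all positive. -/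
lemma trib_fwd (S : ℤ → ℤ)
    (hrule : ∀ n : ℤ, S n = S (n - 1) + S (n - 2) + S (n - 3))
    (P : ℤ → Prop) (hP : ∀ a b c : ℤ, P a → P b → P c → P (a + b + c))
    (n : ℤ) (h0 : P (S n)) (h1 : P (S (n + 1))) (h2 : P (S (n + 2))) :
    ∀ m : ℤ, n ≤ m → P (S m) := by
  have key : ∀ k : ℕ, P (S (n + k)) := by
    intro k
    induction k using Nat.strong_induction_on with
    | _ k ih =>
      match k, ih with
      | 0, _ => simpa
      | 1, _ => simpa
      | 2, _ => simpa
      | (k+3), ih =>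
        have h := hrule (n + ((k : ℤ) + 3))
        have e1 : (n + ((k:ℤ)+3)) - 1 = n + ((k+2 : ℕ) : ℤ) := by push_cast; ring
        have e2 : (n + ((k:ℤ)+3)) - 2 = n + ((k+1 : ℕ) : ℤ) := by push_cast; ring
        have e3 : (n + ((k:ℤ)+3)) - 3 = n + ((k : ℕ) : ℤ) := by ring
        rw [e1, e2, e3] at h
        have hk : (((k+3 : ℕ)) : ℤ) = (k : ℤ) + 3 := by push_cast; ring
        rw [hk, h]
        exact hP _ _ _ (ih (k+2) (by omega)) (ih (k+1) (by omega)) (ih k (by omega))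
  intro m hm
  have : m = n + ((m - n).toNat : ℤ) := by
    rw [Int.toNat_of_nonneg (by omega)]; ring
  rw [this]
  exact key _

/-- Extending an extraTrib to the left: (a) some term is negative; (b) no three
    consecutive terms are all negative; (c) to the left of (and including) any
    negative term there are no three consecutive positive terms. -/
theorem extraTrib_extended_left (S : ℤ → ℤ)
    (hrule : ∀ n : ℤ, S n = S (n - 1) + S (n - 2) + S (n - 3))
    (hpos : ∃ N : ℤ, ∀ n ≥ N, 0 < S n) :
    (∃ k : ℤ, S k < 0) ∧
    (¬∃ n : ℤ, S n < 0 ∧ S (n + 1) < 0 ∧ S (n + 2) < 0) ∧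
    (∀ k : ℤ, S k < 0 →
      ¬∃ n : ℤ, n ≤ k ∧ 0 < S n ∧ 0 < S (n + 1) ∧ 0 < S (n + 2)) := by
  obtain ⟨N, hN⟩ := hpos
  refine ⟨?_, ?_, ?_⟩
  · -- (a)
    by_contra hA
    push_neg at hA
    -- all terms nonneg
    have hnn : ∀ k : ℤ, 0 ≤ S k := hA
    by_cases hz : ∃ m : ℤ, S m = 0
    · obtain ⟨m, hm⟩ := hz
      have h := hrule m
      have h1 : S (m - 1) = 0 := by
        have := hnn (m-1); have := hnn (m-2); have := hnn (m-3); linarith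
      have h2 : S (m - 2) = 0 := by
        have := hnn (m-1); have := hnn (m-2); have := hnn (m-3); linarith
      have h3 : S (m - 3) = 0 := by
        have := hnn (m-1); have := hnn (m-2); have := hnn (m-3); linarith
      have hz1 : S ((m-3) + 1) = 0 := by rw [show (m-3)+1 = m-2 by ring]; exact h2
      have hz2 : S ((m-3) + 2) = 0 := by rw [show (m-3)+2 = m-1 by ring]; exact h1
      have hfwd := trib_fwd S hrule (fun x => x = 0)
        (fun a b c ha hb hc => by simp [ha, hb, hc]) (m-3) h3 hz1 hz2
      have hgt := hN (max N (m-3)) (le_max_left _ _)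
      have heq := hfwd (max N (m-3)) (le_max_right _ _)
      omega
    · push_neg at hz
      have hone : ∀ k : ℤ, 1 ≤ S k := by
        intro k; have := hnn k; have := hz k; omega
      -- descent
      have descent : ∀ k : ℕ, S (N - 2*k) + S (N - 2*k + 1) + 2*k ≤ S N + S (N + 1) := by
        intro k
        induction k with
        | zero => simp
        | succ k ih =>
          have h := hrule (N - 2*(k:ℤ) + 1)
          rw [show N - 2*(k:ℤ) + 1 - 1 = N - 2*(k:ℤ) by ring,
              show N - 2*(k:ℤ) + 1 - 2 = N - 2*((k:ℤ)+1) + 1 by ring,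
              show N - 2*(k:ℤ) + 1 - 3 = N - 2*((k:ℤ)+1) by ring] at h
          have h2 := hone (N - 2*(k:ℤ))
          push_cast
          linarith
      set X := S N + S (N + 1) with hX
      have hX2 : 2 ≤ X := by have := hone N; have := hone (N+1); omega
      have hd := descent X.toNat
      have hcast : ((X.toNat : ℤ)) = X := Int.toNat_of_nonneg (by omega)
      rw [hcast] at hd
      have := hone (N - 2*X); have := hone (N - 2*X + 1)
      omega
  · -- (b)
    rintro ⟨n, h0, h1, h2⟩
    have hfwd := trib_fwd S hrule (fun x => x < 0)
      (fun a b c ha hb hc => by linarith) n h0 h1 h2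
    have hneg := hfwd (max N n) (le_max_right _ _)
    have hgt := hN (max N n) (le_max_left _ _)
    omega
  · -- (c)
    rintro k hk ⟨n, hnk, h0, h1, h2⟩
    have hfwd := trib_fwd S hrule (fun x => 0 < x)
      (fun a b c ha hb hc => by linarith) n h0 h1 h2
    have := hfwd k hnk
    omega
end

section
/- The reversal of an extraTrib is not an extraTrib: if S : ℤ → ℤ satisfies S(n) = S(n−1) + S(n−2) + S(n−3) for all n ∈ ℤ and is eventually positive, then the reversal R defined by R(n) = |S(−n)| does not satisfy the Tribonacci rule; that is, there exists n ∈ ℤ with R(n) ≠ R(n−1) + R(n−2) + R(n−3). -/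
/-- The reversal of an extraTrib is not an extraTrib: if `S : ℤ → ℤ` satisfies
    the Tribonacci rule and is eventually positive, then `R n = |S (−n)|` fails
    the Tribonacci rule at some index. -/
theorem reversal_not_extraTrib (S : ℤ → ℤ)
    (hrule : ∀ n : ℤ, S n = S (n - 1) + S (n - 2) + S (n - 3))
    (hpos : ∃ N : ℤ, ∀ n ≥ N, 0 < S n) :
    ∃ n : ℤ, |S (-n)| ≠ |S (-(n - 1))| + |S (-(n - 2))| + |S (-(n - 3))| := by
  by_contra h
  push_neg at h
  obtain ⟨N, hN⟩ := hpos
  have h1 := h (-N)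
  have e1 : -(-N : ℤ) = N := by ring
  have e2 : -(-N - 1 : ℤ) = N + 1 := by ring
  have e3 : -(-N - 2 : ℤ) = N + 2 := by ring
  have e4 : -(-N - 3 : ℤ) = N + 3 := by ring
  rw [e1, e2, e3, e4] at h1
  have hN0 := hN N le_rfl
  have hN1 := hN (N + 1) (by linarith)
  have hN2 := hN (N + 2) (by linarith)
  have hN3 := hN (N + 3) (by linarith)
  rw [abs_of_pos hN0, abs_of_pos hN1, abs_of_pos hN2, abs_of_pos hN3] at h1
  have hr := hrule (N + 3)
  have e5 : (N + 3 - 1 : ℤ) = N + 2 := by ring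
  have e6 : (N + 3 - 2 : ℤ) = N + 1 := by ring
  have e7 : (N + 3 - 3 : ℤ) = N := by ring
  rw [e5, e6, e7] at hr
  linarith
end

section
/- Every natural number can be written as the sum of four Fibternary numbers. -/
/-- A natural number is Fibternary if all its base-3 digits are 0 or 1 and no
    two consecutive base-3 digits are both 1. -/
def Fibternary (n : ℕ) : Prop :=
  (∀ d ∈ Nat.digits 3 n, d = 0 ∨ d = 1) ∧
  ∀ i : ℕ, ¬((Nat.digits 3 n).getD i 0 = 1 ∧ (Nat.digits 3 n).getD (i + 1) 0 = 1)

namespace FibAux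

/-- digits 0/1, zeros at odd positions -/
def E (n : ℕ) : Prop :=
  (∀ d ∈ Nat.digits 3 n, d = 0 ∨ d = 1) ∧
  ∀ i : ℕ, (Nat.digits 3 n).getD (2 * i + 1) 0 = 0

/-- digits 0/1, zeros at even positions -/
def O (n : ℕ) : Prop :=
  (∀ d ∈ Nat.digits 3 n, d = 0 ∨ d = 1) ∧
  ∀ i : ℕ, (Nat.digits 3 n).getD (2 * i) 0 = 0

lemma digits_step (c x : ℕ) (hx : x < 3) (h : 0 < 3 * c + x) :
    Nat.digits 3 (3 * c + x) = x :: Nat.digits 3 c := by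
  rw [Nat.digits_def' (by norm_num : (1:ℕ) < 3) h]
  have h1 : (3 * c + x) / 3 = c := by omega
  have h2 : (3 * c + x) % 3 = x := by omega
  rw [h1, h2]

lemma getD_succ (c x : ℕ) (hx : x < 3) (i : ℕ) :
    (Nat.digits 3 (3 * c + x)).getD (i + 1) 0 = (Nat.digits 3 c).getD i 0 := by
  rcases Nat.eq_zero_or_pos (3 * c + x) with h | h
  · have hc : c = 0 := by omega
    have hx0 : x = 0 := by omega
    simp [hc, hx0]
  · rw [digits_step c x hx h, List.getD_cons_succ]

lemma getD_zero (c x : ℕ) (hx : x < 3) :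
    (Nat.digits 3 (3 * c + x)).getD 0 0 = x := by
  rcases Nat.eq_zero_or_pos (3 * c + x) with h | h
  · have hc : c = 0 := by omega
    have hx0 : x = 0 := by omega
    simp [hc, hx0]
  · rw [digits_step c x hx h, List.getD_cons_zero]

lemma mem_step (c x : ℕ) (hx : x < 3) :
    ∀ d ∈ Nat.digits 3 (3 * c + x), d = x ∨ d ∈ Nat.digits 3 c := by
  intro d hd
  rcases Nat.eq_zero_or_pos (3 * c + x) with h | h
  · rw [h] at hd; simp at hd
  · rw [digits_step c x hx h] at hd
    rcases List.mem_cons.mp hd with h' | h'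
    · exact Or.inl h'
    · exact Or.inr h'

lemma E_zero : E 0 := by constructor <;> simp [E]

lemma O_zero : O 0 := by constructor <;> simp [O]

lemma E_step (c x : ℕ) (hc : O c) (hx : x ≤ 1) : E (3 * c + x) := by
  constructor
  · intro d hd
    rcases mem_step c x (by omega) d hd with h | h
    · omega
    · exact hc.1 d h
  · intro i
    rw [show 2 * i + 1 = (2 * i) + 1 from rfl, getD_succ c x (by omega)]
    exact hc.2 i

lemma O_step (a : ℕ) (ha : E a) : O (3 * a) := by
  constructor
  · intro d hd
    rcases mem_step a 0 (by norm_num) d (by simpa using hd) with h | h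
    · exact Or.inl h
    · exact ha.1 d h
  · intro i
    cases i with
    | zero =>
        have := getD_zero a 0 (by norm_num)
        simpa using this
    | succ j =>
        have h1 : (Nat.digits 3 (3 * a + 0)).getD (2 * j + 1 + 1) 0
            = (Nat.digits 3 a).getD (2 * j + 1) 0 := getD_succ a 0 (by norm_num) _
        have h2 := ha.2 j
        have : (Nat.digits 3 (3 * a)).getD (2 * (j + 1)) 0
            = (Nat.digits 3 a).getD (2 * j + 1) 0 := by
          rw [show 2 * (j + 1) = 2 * j + 1 + 1 by ring]
          simpa using h1
        rw [this, h2]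

lemma E_fib (n : ℕ) (h : E n) : Fibternary n := by
  refine ⟨h.1, fun i hi => ?_⟩
  rcases Nat.even_or_odd i with he | ho
  · obtain ⟨k, hk⟩ := he
    have := h.2 k
    rw [show 2 * k + 1 = i + 1 by omega] at this
    omega
  · obtain ⟨k, hk⟩ := ho
    have := h.2 k
    rw [show 2 * k + 1 = i by omega] at this
    omega

lemma O_fib (n : ℕ) (h : O n) : Fibternary n := by
  refine ⟨h.1, fun i hi => ?_⟩
  rcases Nat.even_or_odd i with he | ho
  · obtain ⟨k, hk⟩ := he
    have := h.2 k
    rw [show 2 * k = i by omega] at this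
    omega
  · obtain ⟨k, hk⟩ := ho
    have := h.2 (k + 1)
    rw [show 2 * (k + 1) = i + 1 by omega] at this
    omega

lemma key : ∀ n : ℕ, ∃ a b c d : ℕ, E a ∧ E b ∧ O c ∧ O d ∧ n = a + b + c + d := by
  intro n
  induction n using Nat.strong_induction_on with
  | _ n ih =>
    rcases Nat.eq_zero_or_pos n with h0 | h0
    · exact ⟨0, 0, 0, 0, E_zero, E_zero, O_zero, O_zero, by omega⟩
    · have hlt : n / 3 < n := Nat.div_lt_self h0 (by norm_num)
      obtain ⟨a, b, c, d, ha, hb, hc, hd, hsum⟩ := ih (n / 3) hlt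
      set r := n % 3 with hr
      have hr2 : r ≤ 2 := by omega
      set x := min r 1 with hxdef
      set y := r - x with hydef
      have hx : x ≤ 1 := by omega
      have hy : y ≤ 1 := by omega
      refine ⟨3 * c + x, 3 * d + y, 3 * a, 3 * b,
        E_step c x hc hx, E_step d y hd hy, O_step a ha, O_step b hb, ?_⟩
      have : n = 3 * (n / 3) + r := by omega
      omega

end FibAux

/-- Every natural number is the sum of four Fibternary numbers. -/
theorem sum_of_four_fibternary (n : ℕ) :
    ∃ a b c d : ℕ, Fibternary a ∧ Fibternary b ∧ Fibternary c ∧ Fibternary d ∧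
      n = a + b + c + d := by
  obtain ⟨a, b, c, d, ha, hb, hc, hd, h⟩ := FibAux.key n
  exact ⟨a, b, c, d, FibAux.E_fib a ha, FibAux.E_fib b hb, FibAux.O_fib c hc,
    FibAux.O_fib d hd, h⟩
end

section
/- Every natural number can be written as the sum of three Tribternary numbers. -/
/-!
Deal the base-3 digits of `n` out to three summands with digits 0 and 1 only, such that summand
`r` gets no digit at the positions `i ≡ r (mod 3)`: at such a position a digit 1 goes to summand
`r + 1`, a digit 2 to summands `r + 1` and `r + 2`. Any three consecutive positions meet every
residue class mod 3, so no summand has three consecutive digits 1.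
-/

/-- A natural number is Tribternary if all its base-3 digits are 0 or 1 and no
    three consecutive base-3 digits are all 1. -/
def Tribternary (n : ℕ) : Prop :=
  (∀ d ∈ Nat.digits 3 n, d = 0 ∨ d = 1) ∧
  ∀ i : ℕ, ¬((Nat.digits 3 n).getD i 0 = 1 ∧ (Nat.digits 3 n).getD (i + 1) 0 = 1 ∧
    (Nat.digits 3 n).getD (i + 2) 0 = 1)

lemma Nat.mul_add_div_pow_succ {b y e : ℕ} (he : e < b) (i : ℕ) :
    (b * y + e) / b ^ (i + 1) = y / b ^ i := by
  rw [pow_succ', ← Nat.div_div_eq_div_mul, Nat.mul_add_div (by omega), Nat.div_eq_of_lt he,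
    add_zero]

def BitDigitsVanishMod3 (r : ZMod 3) (x : ℕ) : Prop :=
  ∀ i : ℕ, x / 3 ^ i % 3 ≤ 1 ∧ ((i : ZMod 3) = r → x / 3 ^ i % 3 = 0)

lemma bitDigitsVanishMod3_zero (r : ZMod 3) : BitDigitsVanishMod3 r 0 := by
  simp [BitDigitsVanishMod3]

lemma BitDigitsVanishMod3.three_mul_add {r : ZMod 3} {y e : ℕ} (hy : BitDigitsVanishMod3 r y)
    (he : e ≤ 1) (he₀ : r + 1 = 0 → e = 0) : BitDigitsVanishMod3 (r + 1) (3 * y + e) := by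
  rintro (_ | i)
  · rw [pow_zero, Nat.div_one, Nat.mul_add_mod, Nat.mod_eq_of_lt (by omega), Nat.cast_zero]
    exact ⟨he, fun h => he₀ h.symm⟩
  · rw [Nat.mul_add_div_pow_succ (by omega), Nat.cast_succ, add_left_inj]
    exact hy i

lemma BitDigitsVanishMod3.tribternary {r : ZMod 3} {x : ℕ} (hx : BitDigitsVanishMod3 r x) :
    Tribternary x := by
  have hdigit (i : ℕ) : (Nat.digits 3 x).getD i 0 = x / 3 ^ i % 3 :=
    Nat.getD_digits _ _ (by norm_num)
  constructor
  · intro d hd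
    obtain ⟨i, hi, rfl⟩ := List.mem_iff_getElem.mp hd
    have hbit := (hx i).1
    rw [← hdigit, List.getD_eq_getElem _ _ hi] at hbit
    omega
  · rintro i ⟨h₀, h₁, h₂⟩
    obtain ⟨k, hk, hkr⟩ : ∃ k < 3, ((i + k : ℕ) : ZMod 3) = r :=
      ⟨(r - i).val, ZMod.val_lt _, by simp⟩
    have hzero := (hx (i + k)).2 hkr
    rw [← hdigit] at hzero
    interval_cases k <;> simp_all

/-- Peeling off the last digit `d = n % 3` shifts every position by one, so the three summands
for `n / 3` trade roles; `d` itself is split as `min d 1 + d / 2`. -/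
lemma exists_bitDigitsVanishMod3_sum (n : ℕ) : ∃ a b c, BitDigitsVanishMod3 0 a ∧
    BitDigitsVanishMod3 1 b ∧ BitDigitsVanishMod3 2 c ∧ n = a + b + c := by
  induction n using Nat.strong_induction_on with
  | _ n ih =>
  rcases Nat.eq_zero_or_pos n with rfl | hn
  · exact ⟨0, 0, 0, bitDigitsVanishMod3_zero _, bitDigitsVanishMod3_zero _,
      bitDigitsVanishMod3_zero _, rfl⟩
  obtain ⟨a, b, c, ha, hb, hc, habc⟩ := ih (n / 3) (by omega)
  refine ⟨3 * c + 0, 3 * a + min (n % 3) 1, 3 * b + n % 3 / 2,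
    hc.three_mul_add (by omega) fun _ => rfl, ha.three_mul_add (by omega) ?_,
    hb.three_mul_add (by omega) ?_, by omega⟩ <;> exact fun h => absurd h (by decide)

/-- Every natural number is the sum of three Tribternary numbers. -/
theorem sum_of_three_tribternary (n : ℕ) :
    ∃ a b c : ℕ, Tribternary a ∧ Tribternary b ∧ Tribternary c ∧ n = a + b + c := by
  obtain ⟨a, b, c, ha, hb, hc, rfl⟩ := exists_bitDigitsVanishMod3_sum n
  exact ⟨a, b, c, ha.tribternary, hb.tribternary, hc.tribternary, rfl⟩
end

section
/- Every positive integer n has a positive multiple that is a Fibternary number. -/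
/-!
The numbers `∑ i < k, 9 ^ i` have base-3 expansion `1010…101`, so they are Fibternary, and
so is any multiple of them by a power of 3. By pigeonhole two of them, for `a < b`, agree
modulo `n`; their difference `9 ^ a * ∑ i < b - a, 9 ^ i` is the required multiple.
-/

open Finset

namespace Fibternary

theorem three_mul {m : ℕ} (h : Fibternary m) : Fibternary (3 * m) := by
  rcases m.eq_zero_or_pos with rfl | hm
  · simpa using h
  obtain ⟨hdigit, hsparse⟩ := h
  rw [Fibternary, Nat.digits_base_mul (by norm_num) hm]
  refine ⟨List.forall_mem_cons.2 ⟨Or.inl rfl, hdigit⟩, ?_⟩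
  rintro (_ | i)
  · simp
  · simpa using hsparse i

theorem three_pow_mul {m : ℕ} (h : Fibternary m) (j : ℕ) : Fibternary (3 ^ j * m) := by
  induction j with
  | zero => simpa using h
  | succ j ih => simpa [pow_succ', mul_assoc] using ih.three_mul

theorem three_mul_add_one {m : ℕ} (h : Fibternary m) (hm : m % 3 = 0) :
    Fibternary (3 * m + 1) := by
  obtain ⟨hdigit, hsparse⟩ := h
  have hdigits : Nat.digits 3 (3 * m + 1) = 1 :: Nat.digits 3 m := by
    rw [Nat.digits_add_two_add_one 1 (3 * m)]
    congr 2 <;> omega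
  rw [Fibternary, hdigits]
  refine ⟨List.forall_mem_cons.2 ⟨Or.inr rfl, hdigit⟩, ?_⟩
  rintro (_ | i)
  · rw [List.getD_cons_succ, Nat.getD_digits m 0 (by norm_num : 2 ≤ 3)]
    simp [hm]
  · simpa using hsparse i

end Fibternary

theorem fibternary_sum_range_nine_pow (k : ℕ) : Fibternary (∑ i ∈ range k, 9 ^ i) := by
  induction k with
  | zero => simp [Fibternary]
  | succ k ih =>
    have hsum : ∑ i ∈ range (k + 1), 9 ^ i = 3 * (3 * ∑ i ∈ range k, 9 ^ i) + 1 := by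
      simp only [sum_range_succ', pow_succ, ← sum_mul]
      ring
    rw [hsum]
    exact ih.three_mul.three_mul_add_one (by omega)

/-- Every positive integer has a positive Fibternary multiple. -/
theorem exists_fibternary_multiple (n : ℕ) (hn : 0 < n) :
    ∃ m : ℕ, 0 < m ∧ n ∣ m ∧ Fibternary m := by
  have : NeZero n := ⟨hn.ne'⟩
  obtain ⟨a, b, hab, hcongr⟩ := Set.finite_univ.exists_lt_map_eq_of_forall_mem
    (f := fun k ↦ ((∑ i ∈ range k, 9 ^ i : ℕ) : ZMod n)) (fun _ ↦ Set.mem_univ _)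
  obtain ⟨t, rfl⟩ := Nat.exists_eq_add_of_lt hab
  have hsplit : ∑ i ∈ range (a + t + 1), 9 ^ i
      = ∑ i ∈ range a, 9 ^ i + 9 ^ a * ∑ i ∈ range (t + 1), 9 ^ i := by
    rw [add_assoc, sum_range_add, mul_sum]
    simp only [pow_add]
  refine ⟨9 ^ a * ∑ i ∈ range (t + 1), 9 ^ i, by positivity, ?_, ?_⟩
  · rw [← ZMod.natCast_eq_zero_iff]
    simpa [hsplit] using hcongr.symm
  · simpa [show (9 : ℕ) ^ a = 3 ^ (2 * a) by rw [pow_mul]; norm_num] using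
      (fibternary_sum_range_nine_pow (t + 1)).three_pow_mul (2 * a)
end

section
/- For every natural number n, the number of Tribbinary numbers smaller than 2^n equals T(n+3). -/
/-- A natural number is Tribbinary if its binary expansion contains no three
    consecutive digits all equal to 1. -/
def Tribbinary (n : ℕ) : Prop :=
  ∀ i : ℕ, ¬((Nat.digits 2 n).getD i 0 = 1 ∧ (Nat.digits 2 n).getD (i + 1) 0 = 1 ∧
    (Nat.digits 2 n).getD (i + 2) 0 = 1)

lemma getD_digits (i m : ℕ) : (Nat.digits 2 m).getD i 0 = m / 2 ^ i % 2 := by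
  induction i generalizing m with
  | zero =>
    rcases m with _ | m
    · simp
    · rw [Nat.digits_def' (by norm_num : 1 < 2) (Nat.succ_pos m)]
      simp
  | succ i ih =>
    rcases m with _ | m
    · simp
    · rw [Nat.digits_def' (by norm_num : 1 < 2) (Nat.succ_pos m)]
      rw [List.getD_cons_succ, ih, Nat.div_div_eq_div_mul, pow_succ, mul_comm (2^i) 2]

lemma div_pow_succ (m i : ℕ) : m / 2 ^ (i + 1) = m / 2 ^ i / 2 := by
  rw [Nat.div_div_eq_div_mul, pow_succ]

lemma tribbinary_iff (m : ℕ) : Tribbinary m ↔ ∀ i : ℕ, m / 2 ^ i % 8 ≠ 7 := by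
  unfold Tribbinary
  simp only [getD_digits]
  constructor
  · intro h i hi
    apply h i
    rw [div_pow_succ]
    rw [show i + 2 = (i+1)+1 from rfl, div_pow_succ, div_pow_succ]
    omega
  · intro h i hi
    apply h i
    rw [div_pow_succ] at hi
    rw [show i + 2 = (i+1)+1 from rfl, div_pow_succ, div_pow_succ] at hi
    omega

lemma div_shift1 (k i : ℕ) : 2 * k / 2 ^ (i + 1) = k / 2 ^ i := by
  rw [pow_succ, mul_comm (2^i) 2, ← Nat.div_div_eq_div_mul,
    Nat.mul_div_cancel_left _ (by norm_num : (0:ℕ) < 2)]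

lemma div_shift2 (k r i : ℕ) (hr : r < 4) : (4 * k + r) / 2 ^ (i + 2) = k / 2 ^ i := by
  have h4 : (2:ℕ) ^ (i + 2) = 4 * 2 ^ i := by ring
  rw [h4, mul_comm, ← Nat.div_div_eq_div_mul]
  congr 1
  omega

lemma div_shift3 (k r i : ℕ) (hr : r < 8) : (8 * k + r) / 2 ^ (i + 3) = k / 2 ^ i := by
  have h8 : (2:ℕ) ^ (i + 3) = 8 * 2 ^ i := by ring
  rw [h8, mul_comm, ← Nat.div_div_eq_div_mul]
  congr 1
  omega

lemma trib_two_mul (k : ℕ) : Tribbinary (2 * k) ↔ Tribbinary k := by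
  simp only [tribbinary_iff]
  constructor
  · intro h i
    rw [← div_shift1]
    exact h (i + 1)
  · intro h i
    match i with
    | 0 => simp; omega
    | j + 1 => rw [div_shift1]; exact h j

lemma trib_four_mul (k : ℕ) : Tribbinary (4 * k + 1) ↔ Tribbinary k := by
  simp only [tribbinary_iff]
  constructor
  · intro h i
    rw [← div_shift2 k 1 i (by norm_num)]
    exact h (i + 2)
  · intro h i
    match i with
    | 0 => simp; omega
    | 1 => norm_num; omega
    | j + 2 => rw [div_shift2 k 1 j (by norm_num)]; exact h j

lemma trib_eight_mul (k : ℕ) : Tribbinary (8 * k + 3) ↔ Tribbinary k := by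
  simp only [tribbinary_iff]
  constructor
  · intro h i
    rw [← div_shift3 k 3 i (by norm_num)]
    exact h (i + 3)
  · intro h i
    match i with
    | 0 => simp
    | 1 => norm_num; omega
    | 2 => norm_num; omega
    | j + 3 => rw [div_shift3 k 3 j (by norm_num)]; exact h j

lemma not_trib_seven (k : ℕ) : ¬ Tribbinary (8 * k + 7) := by
  rw [tribbinary_iff]
  intro h
  apply h 0
  simp

lemma trib_small (m : ℕ) (hm : m < 4) : Tribbinary m := by
  rw [tribbinary_iff]
  intro i
  have h := Nat.div_le_self m (2 ^ i)
  generalize m / 2 ^ i = d at h ⊢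
  omega

lemma S_finite (n : ℕ) : {m : ℕ | m < 2 ^ n ∧ Tribbinary m}.Finite :=
  (Set.finite_Iio (2 ^ n)).subset (fun _ hm => hm.1)

lemma S_step (n : ℕ) :
    {m : ℕ | m < 2 ^ (n + 3) ∧ Tribbinary m} =
      (fun k => 2 * k) '' {m : ℕ | m < 2 ^ (n + 2) ∧ Tribbinary m} ∪
      (fun k => 4 * k + 1) '' {m : ℕ | m < 2 ^ (n + 1) ∧ Tribbinary m} ∪
      (fun k => 8 * k + 3) '' {m : ℕ | m < 2 ^ n ∧ Tribbinary m} := by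
  have hp2 : (2:ℕ) ^ (n + 3) = 2 * 2 ^ (n + 2) := by ring
  have hp3 : (2:ℕ) ^ (n + 3) = 4 * 2 ^ (n + 1) := by ring
  have hp8 : (2:ℕ) ^ (n + 3) = 8 * 2 ^ n := by ring
  ext m
  simp only [Set.mem_setOf_eq, Set.mem_union, Set.mem_image]
  constructor
  · rintro ⟨hlt, ht⟩
    rcases Nat.mod_two_eq_zero_or_one m with h2 | h2
    · left; left
      refine ⟨m / 2, ⟨by omega, ?_⟩, by omega⟩
      rw [← trib_two_mul, show 2 * (m / 2) = m from by omega]; exact ht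
    · have h4 : m % 4 = 1 ∨ m % 4 = 3 := by omega
      rcases h4 with h4 | h4
      · left; right
        refine ⟨m / 4, ⟨by omega, ?_⟩, by omega⟩
        rw [← trib_four_mul, show 4 * (m / 4) + 1 = m from by omega]; exact ht
      · have h8 : m % 8 = 3 ∨ m % 8 = 7 := by omega
        rcases h8 with h8 | h8
        · right
          refine ⟨m / 8, ⟨by omega, ?_⟩, by omega⟩
          rw [← trib_eight_mul, show 8 * (m / 8) + 3 = m from by omega]; exact ht
        · exfalso
          have hns := not_trib_seven (m / 8)
          rw [show 8 * (m / 8) + 7 = m from by omega] at hns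
          exact hns ht
  · rintro ((⟨k, ⟨hk, ht⟩, rfl⟩ | ⟨k, ⟨hk, ht⟩, rfl⟩) | ⟨k, ⟨hk, ht⟩, rfl⟩)
    · exact ⟨by omega, (trib_two_mul k).2 ht⟩
    · exact ⟨by omega, (trib_four_mul k).2 ht⟩
    · exact ⟨by omega, (trib_eight_mul k).2 ht⟩

lemma S_base (j : ℕ) (hj : j ≤ 2) :
    {m : ℕ | m < 2 ^ j ∧ Tribbinary m} = ↑(Finset.range (2 ^ j)) := by
  have h4 : (2:ℕ) ^ j ≤ 4 := by
    calc (2:ℕ) ^ j ≤ 2 ^ 2 := Nat.pow_le_pow_right (by norm_num) hj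
    _ = 4 := by norm_num
  ext m
  simp only [Set.mem_setOf_eq, Finset.coe_range, Set.mem_Iio]
  exact ⟨fun h => h.1, fun h => ⟨h, trib_small m (by omega)⟩⟩

/-- The number of Tribbinary numbers smaller than `2^n` equals `T(n+3)`. -/
theorem tribbinary_count (n : ℕ) :
    {m : ℕ | m < 2 ^ n ∧ Tribbinary m}.ncard = trib (n + 3) := by
  induction n using Nat.strong_induction_on with
  | _ n ih =>
    match n with
    | 0 => rw [S_base 0 (by norm_num), Set.ncard_coe_finset, Finset.card_range]; rfl
    | 1 => rw [S_base 1 (by norm_num), Set.ncard_coe_finset, Finset.card_range]; rfl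
    | 2 => rw [S_base 2 (by norm_num), Set.ncard_coe_finset, Finset.card_range]; rfl
    | (k + 3) =>
      have f0 := S_finite k
      have f1 := S_finite (k + 1)
      have f2 := S_finite (k + 2)
      have inj2 : Function.Injective (fun k : ℕ => 2 * k) := fun a b h => by
        simp only at h; omega
      have inj4 : Function.Injective (fun k : ℕ => 4 * k + 1) := fun a b h => by
        simp only at h; omega
      have inj8 : Function.Injective (fun k : ℕ => 8 * k + 3) := fun a b h => by
        simp only at h; omega
      have d1 : Disjoint ((fun k => 2 * k) '' {m : ℕ | m < 2 ^ (k + 2) ∧ Tribbinary m})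
          ((fun k => 4 * k + 1) '' {m : ℕ | m < 2 ^ (k + 1) ∧ Tribbinary m}) := by
        rw [Set.disjoint_left]
        rintro x ⟨a, _, rfl⟩ ⟨b, _, hb⟩
        simp only at hb; omega
      have d2 : Disjoint ((fun k => 2 * k) '' {m : ℕ | m < 2 ^ (k + 2) ∧ Tribbinary m} ∪
          (fun k => 4 * k + 1) '' {m : ℕ | m < 2 ^ (k + 1) ∧ Tribbinary m})
          ((fun k => 8 * k + 3) '' {m : ℕ | m < 2 ^ k ∧ Tribbinary m}) := by
        rw [Set.disjoint_left]
        rintro x (⟨a, _, rfl⟩ | ⟨a, _, rfl⟩) ⟨b, _, hb⟩ <;> (simp only at hb; omega)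
      rw [S_step k, Set.ncard_union_eq d2 ((f2.image _).union (f1.image _)) (f0.image _),
        Set.ncard_union_eq d1 (f2.image _) (f1.image _),
        Set.ncard_image_of_injective _ inj2, Set.ncard_image_of_injective _ inj4,
        Set.ncard_image_of_injective _ inj8,
        ih (k + 2) (by omega), ih (k + 1) (by omega), ih k (by omega)]
      show trib (k + 5) + trib (k + 4) + trib (k + 3) = trib (k + 6)
      conv_rhs => rw [show k + 6 = (k + 3) + 3 from rfl, trib]
end
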